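/- For k a power of 2 and any positive integer n, the Kloosterman-type sum S_k(n) := (1/2)·√(k/12) · Σ_{x mod 24k, x² ≡ -24n+1 (mod 24k)} χ₁₂(x)·e(x/(12k)) is nonzero, where χ₁₂ is the Kronecker symbol (12/·) and e(t) = e^{2πit}. -/

import Mathlib

open Complex

/-- The Kronecker symbol `(12/x)`: the real primitive character modulo 12. -/
def chi12 (x : ℕ) : ℤ :=
  if x % 12 = 1 ∨ x % 12 = 11 then 1
  else if x % 12 = 5 ∨ x % 12 = 7 then -1
  else 0

/-- The Kloosterman-type sum `S_k(n)` of the paper: the sum runs over the residues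
`x` modulo `24k` with `x² ≡ -24n+1 (mod 24k)`. -/
noncomputable def kloostermanS (k n : ℕ) : ℂ :=
  (1 / 2 : ℂ) * (Real.sqrt ((k : ℝ) / 12) : ℂ) *
    ∑ x ∈ (Finset.range (24 * k)).filter
        (fun x : ℕ => ((x : ℤ) ^ 2) % (24 * (k : ℤ)) = (-24 * (n : ℤ) + 1) % (24 * (k : ℤ))),
      (chi12 x : ℂ) * Complex.exp (2 * Real.pi * I * ((x : ℂ) / (12 * (k : ℂ))))

/-!
Put `Q = 4k = 2 ^ (s + 2)`, so that `24k = 6Q` and `12k = 3Q`. As `1 - 24n ≡ 1 (mod 8)`, it has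
an odd square root `r` modulo `2Q`, and the `x` in the sum are those prime to `3` with
`x ≡ ±r (mod Q)`. Writing `x = y + Qj` with `y ∈ {r, Q - r}` and `j < 6`, the factor `e(x / 3Q)`
is `e(y / 3Q) ω ^ j` with `ω = e(1/3)`, and since `χ₁₂ = χ₄ · (·/3)` with `χ₄` constant on the
class, the sum over `j` is a cubic Gauss sum, equal to `2 χ₄(y) ω ^ (2Qy) (ω ^ Q - ω ^ (2Q))`.
As `χ₄(Q - r) = -χ₄(r)`, the whole sum is a nonzero multiple of `e(rc / 3Q) - e((Q - r)c / 3Q)`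
with `c = 2Q² + 1`, and this difference vanishes only if `3Q ∣ (2r - Q)c`, which is impossible
modulo `4` because `r` is odd.
-/

open Finset
open scoped Real

lemma chi12_congr {x y : ℕ} (h : x ≡ y [MOD 12]) : chi12 x = chi12 y := by
  simp only [chi12, show x % 12 = y % 12 from h]

lemma chi12_eq_zero_of_three_dvd {x : ℕ} (hx : 3 ∣ x) : chi12 x = 0 := by
  unfold chi12
  split_ifs <;> omega

lemma χ₄_nat_sub_eq_neg {Q r : ℕ} (hQ : 4 ∣ Q) (hr : Odd r) (hrQ : r ≤ Q) :
    ZMod.χ₄ (Q - r : ℕ) = -ZMod.χ₄ r := by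
  obtain ⟨a, rfl⟩ := hr
  simp only [ZMod.χ₄_nat_eq_if_mod_four]
  split_ifs <;> omega

lemma exists_odd_sq_sub_dvd (t : ℕ) {m : ℤ} (hm : 8 ∣ m - 1) :
    ∃ r : ℕ, Odd r ∧ r < 2 ^ (t + 2) ∧ (2 ^ (t + 3) : ℤ) ∣ r ^ 2 - m := by
  induction t with
  | zero => exact ⟨1, odd_one, by norm_num, by simpa using hm.neg_right⟩
  | succ t ih =>
    obtain ⟨r, hr, hrQ, c, hc⟩ := ih
    have hpow : 2 ^ (t + 1 + 2) = 2 * 2 ^ (t + 2) := by ring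
    rcases Int.even_or_odd' c with ⟨d, rfl | rfl⟩
    · exact ⟨r, hr, by omega, d, by rw [hc]; ring⟩
    · -- adding `2 ^ (t + 2)` to `r` changes `r ^ 2` by an odd multiple of `2 ^ (t + 3)`
      obtain ⟨a, rfl⟩ := hr
      refine ⟨2 * a + 1 + 2 ^ (t + 2), by simp [parity_simps], by omega,
        d + a + 1 + 2 ^ t, ?_⟩
      push_cast at hc ⊢
      linear_combination hc

lemma sq_modEq_sq_iff_of_odd {t : ℕ} {x r : ℤ} (hr : Odd r) :
    x ^ 2 ≡ r ^ 2 [ZMOD 2 ^ (t + 3)] ↔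
      x ≡ r [ZMOD 2 ^ (t + 2)] ∨ x ≡ -r [ZMOD 2 ^ (t + 2)] := by
  simp only [Int.modEq_iff_dvd]
  have hfac : r ^ 2 - x ^ 2 = (r - x) * (r + x) := by ring
  constructor
  · intro h
    have h2 : (2 : ℤ) ∣ (r - x) * (r + x) := hfac ▸ (dvd_pow_self 2 (by omega)).trans h
    obtain ⟨⟨a, ha⟩, ⟨b, hb⟩⟩ : (2 : ℤ) ∣ r - x ∧ (2 : ℤ) ∣ r + x := by
      rcases Int.prime_two.dvd_or_dvd h2 with h | h <;> omega
    have hab : (2 : ℤ) ^ (t + 1) ∣ a * b := by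
      rw [hfac, ha, hb, show (2 : ℤ) ^ (t + 3) = 4 * 2 ^ (t + 1) by ring,
        show 2 * a * (2 * b) = 4 * (a * b) by ring] at h
      exact (mul_dvd_mul_iff_left (by norm_num)).mp h
    have hpow : (2 : ℤ) ^ (t + 2) = 2 * 2 ^ (t + 1) := by ring
    -- `a + b = r` is odd, so one of `a`, `b` is odd and the other carries all the powers of 2
    rcases Int.even_or_odd a with ha' | ha'
    · have hb' : Odd b := by rw [show b = r - a by omega]; exact hr.sub_even ha'
      left
      rw [ha, hpow]
      exact mul_dvd_mul_left 2 ((Int.isCoprime_two_left.mpr hb').pow_left.dvd_of_dvd_mul_right hab)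
    · right
      rw [show -r - x = -(2 * b) by omega, dvd_neg, hpow]
      exact mul_dvd_mul_left 2 ((Int.isCoprime_two_left.mpr ha').pow_left.dvd_of_dvd_mul_left hab)
  · have hpow : (2 : ℤ) ^ (t + 3) = 2 ^ (t + 2) * 2 := by ring
    rintro (h | h)
    · rw [hfac, hpow]
      exact mul_dvd_mul h (by obtain ⟨c, hc⟩ := (dvd_pow_self 2 (by omega)).trans h; omega)
    · rw [hfac, hpow, mul_comm (r - x)]
      refine mul_dvd_mul (by simpa [neg_add', add_comm] using h.neg_right) ?_
      obtain ⟨c, hc⟩ := (dvd_pow_self 2 (by omega)).trans h; omega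

lemma sq_modEq_one_iff_not_three_dvd (x : ℤ) : x ^ 2 ≡ 1 [ZMOD 3] ↔ ¬ 3 ∣ x := by
  rw [← Nat.cast_ofNat, ← ZMod.intCast_eq_intCast_iff, ← ZMod.intCast_zmod_eq_zero_iff_dvd]
  push_cast
  generalize (x : ZMod 3) = z
  revert z
  decide

lemma natCast_modEq_iff_emod_eq {x r Q : ℕ} (h : r < Q) :
    (x : ℤ) ≡ r [ZMOD Q] ↔ x % Q = r := by
  rw [Int.natCast_modEq_iff, Nat.ModEq, Nat.mod_eq_of_lt h]

lemma sq_emod_eq_iff {t r : ℕ} {m : ℤ} (hm : 3 ∣ m - 1) (hr : Odd r) (hrQ : r < 2 ^ (t + 2))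
    (hsq : (2 ^ (t + 3) : ℤ) ∣ r ^ 2 - m) (x : ℕ) :
    (x : ℤ) ^ 2 % (3 * 2 ^ (t + 3)) = m % (3 * 2 ^ (t + 3)) ↔
      (x % 2 ^ (t + 2) = r ∨ x % 2 ^ (t + 2) = 2 ^ (t + 2) - r) ∧ ¬ 3 ∣ x := by
  have hcop : (3 : ℤ).natAbs.Coprime (2 ^ (t + 3) : ℤ).natAbs := by
    simpa [Int.natAbs_pow] using Nat.Coprime.pow_right (t + 3) (by norm_num : Nat.Coprime 3 2)
  have hm3 : m % 3 = 1 % 3 := (Int.modEq_iff_dvd.mpr hm).symm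
  have hm2 : m % 2 ^ (t + 3) = r ^ 2 % 2 ^ (t + 3) := Int.modEq_iff_dvd.mpr hsq
  have hneg : -(r : ℤ) ≡ (2 ^ (t + 2) - r : ℕ) [ZMOD (2 ^ (t + 2) : ℕ)] :=
    Int.modEq_iff_dvd.mpr ⟨1, by push_cast [Nat.cast_sub hrQ.le]; ring⟩
  change _ ≡ _ [ZMOD _] ↔ _
  rw [← Int.modEq_and_modEq_iff_modEq_mul hcop, and_comm]
  refine and_congr ?_ ?_
  · change _ % _ = _ ↔ _
    rw [hm2]
    refine (sq_modEq_sq_iff_of_odd (by exact_mod_cast hr)).trans (or_congr ?_ ?_)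
    · exact_mod_cast natCast_modEq_iff_emod_eq hrQ
    · rw [← natCast_modEq_iff_emod_eq (by have := hr.pos; omega)]
      push_cast at hneg ⊢
      exact ⟨fun h => h.trans hneg, fun h => h.trans hneg.symm⟩
  · change _ % _ = _ ↔ _
    rw [hm3]
    exact (sq_modEq_one_iff_not_three_dvd x).trans (not_congr Int.natCast_dvd_natCast)

lemma sum_filter_emod_eq {M : Type*} [AddCommMonoid M] (f : ℕ → M) (c : ℕ) {Q r : ℕ}
    (hrQ : r < Q) :
    ∑ x ∈ (range (c * Q)).filter (· % Q = r), f x = ∑ j ∈ range c, f (r + Q * j) := by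
  refine sum_nbij' (· / Q) (r + Q * ·) ?_ ?_ ?_ ?_ ?_ <;> simp only [mem_filter, mem_range]
  · rintro x ⟨hx, -⟩
    exact Nat.div_lt_of_lt_mul (by rwa [mul_comm])
  · intro j hj
    refine ⟨by nlinarith, by rw [Nat.add_mul_mod_self_left, Nat.mod_eq_of_lt hrQ]⟩
  · rintro x ⟨-, rfl⟩
    exact Nat.mod_add_div x Q
  · intro j _
    rw [Nat.add_mul_div_left _ _ (by omega), Nat.div_eq_of_lt hrQ, zero_add]
  · rintro x ⟨-, rfl⟩
    rw [Nat.mod_add_div x Q]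

lemma sum_filter_sq_emod_eq {t r : ℕ} {m : ℤ} (hm : 3 ∣ m - 1) (hr : Odd r)
    (hrQ : r < 2 ^ (t + 2)) (hsq : (2 ^ (t + 3) : ℤ) ∣ r ^ 2 - m) {M : Type*} [AddCommMonoid M]
    (f : ℕ → M) (hf : ∀ x, 3 ∣ x → f x = 0) :
    ∑ x ∈ (range (6 * 2 ^ (t + 2))).filter
        (fun x : ℕ => (x : ℤ) ^ 2 % (3 * 2 ^ (t + 3)) = m % (3 * 2 ^ (t + 3))), f x =
      ∑ j ∈ range 6, f (r + 2 ^ (t + 2) * j) +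
        ∑ j ∈ range 6, f (2 ^ (t + 2) - r + 2 ^ (t + 2) * j) := by
  have hr0 := hr.pos
  have hdisj : Disjoint ((range (6 * 2 ^ (t + 2))).filter (· % 2 ^ (t + 2) = r))
      ((range (6 * 2 ^ (t + 2))).filter (· % 2 ^ (t + 2) = 2 ^ (t + 2) - r)) := by
    rw [disjoint_filter]
    have : 2 ^ (t + 2) = 2 * 2 ^ (t + 1) := by ring
    rintro x - rfl
    obtain ⟨a, ha⟩ := hr
    omega
  rw [filter_congr fun x _ => sq_emod_eq_iff hm hr hrQ hsq x, ← filter_filter,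
    sum_filter_of_ne (p := (¬ 3 ∣ ·)) fun x _ hx h3 => hx (hf x h3), filter_or, sum_union hdisj,
    sum_filter_emod_eq f 6 hrQ, sum_filter_emod_eq f 6 (by omega)]

lemma sum_chi12_mul_pow {R : Type*} [CommRing R] {ω : R} (hω : ω ^ 3 = 1) (y : ℕ) {Q : ℕ}
    (hQ : Q % 12 = 4 ∨ Q % 12 = 8) :
    ∑ j ∈ range 6, (chi12 (y + Q * j) : R) * ω ^ j =
      2 * ZMod.χ₄ y * ω ^ (2 * Q * y) * (ω ^ Q - ω ^ (2 * Q)) := by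
  have hpow {a b : ℕ} (h : a ≡ b [MOD 12]) : ω ^ a = ω ^ b := by
    rw [pow_eq_pow_mod a hω, pow_eq_pow_mod b hω, show a % 3 = b % 3 from h.of_dvd (by norm_num)]
  have hy := Nat.mod_modEq y 12
  have hQ' := Nat.mod_modEq Q 12
  have hχ : ZMod.χ₄ y = ZMod.χ₄ (y % 12 : ℕ) := by
    rw [ZMod.χ₄_nat_mod_four, ZMod.χ₄_nat_mod_four (y % 12),
      Nat.mod_mod_of_dvd _ (by norm_num)]
  simp_rw [hχ, hpow ((hQ'.mul_left 2).mul hy).symm, hpow hQ'.symm, hpow (hQ'.mul_left 2).symm,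
    chi12_congr (hy.symm.add (hQ'.symm.mul_right _))]
  -- both sides now depend only on `y % 12` and `Q % 12`: check the 24 residue pairs
  have hy12 := Nat.mod_lt y (show 12 > 0 by norm_num)
  generalize y % 12 = y at *
  rcases hQ with hQ | hQ <;> rw [hQ] <;> interval_cases y <;> simp [sum_range_succ, chi12] <;> grind

lemma IsPrimitiveRoot.pow_sub_pow_two_mul_ne_zero {R : Type*} [CommRing R] [IsDomain R] {ζ : R}
    (h : IsPrimitiveRoot ζ 3) {Q : ℕ} (hQ : ¬ 3 ∣ Q) : ζ ^ Q - ζ ^ (2 * Q) ≠ 0 := by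
  rw [sub_ne_zero, mul_comm, pow_mul, sq]
  intro h'
  nth_rewrite 1 [← mul_one (ζ ^ Q)] at h'
  have hQ1 := mul_left_cancel₀ (pow_ne_zero Q (h.ne_zero (by norm_num))) h'
  exact hQ ((h.pow_eq_one_iff_dvd Q).mp hQ1.symm)

local notation "ω" => Complex.exp (2 * π * I / 3)

lemma isPrimitiveRoot_omega : IsPrimitiveRoot ω 3 := by
  simpa using isPrimitiveRoot_exp 3 (by norm_num)

lemma sum_chi12_mul_exp {Q : ℕ} (hQ : Q % 12 = 4 ∨ Q % 12 = 8) (y : ℕ) :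
    ∑ j ∈ range 6,
        (chi12 (y + Q * j) : ℂ) * exp (2 * π * I * (((y + Q * j : ℕ) : ℂ) / (3 * Q))) =
      2 * ZMod.χ₄ y * (ω ^ Q - ω ^ (2 * Q)) *
        exp (2 * π * I * (y * (2 * Q ^ 2 + 1) / (3 * Q))) := by
  have hQ0 : (Q : ℂ) ≠ 0 := by norm_cast; omega
  have hterm (j : ℕ) : exp (2 * π * I * (((y + Q * j : ℕ) : ℂ) / (3 * Q))) =
      exp (2 * π * I * (y / (3 * Q))) * ω ^ j := by
    rw [← exp_nat_mul, ← exp_add]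
    congr 1
    push_cast
    field_simp
  have hphase : exp (2 * π * I * (y / (3 * Q))) * ω ^ (2 * Q * y) =
      exp (2 * π * I * (y * (2 * Q ^ 2 + 1) / (3 * Q))) := by
    rw [← exp_nat_mul, ← exp_add]
    congr 1
    push_cast
    field_simp
    ring
  simp_rw [hterm, mul_left_comm _ (exp _), ← mul_sum,
    sum_chi12_mul_pow isPrimitiveRoot_omega.pow_eq_one y hQ, ← hphase]
  ring

lemma exp_ne_exp_of_odd {Q r : ℕ} (hQ : 4 ∣ Q) (hr : Odd r) (hrQ : r < Q) :
    exp (2 * π * I * (r * (2 * Q ^ 2 + 1) / (3 * Q))) ≠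
      exp (2 * π * I * ((Q - r : ℕ) * (2 * Q ^ 2 + 1) / (3 * Q))) := by
  intro h
  obtain ⟨m, hm⟩ := exp_eq_exp_iff_exists_int.mp h
  have hQ0 : (Q : ℂ) ≠ 0 := by norm_cast; omega
  have hint : ((2 * r - Q) * (2 * Q ^ 2 + 1) : ℤ) = 3 * Q * m := by
    have hm' : (r : ℂ) * (2 * Q ^ 2 + 1) / (3 * Q) = (Q - r) * (2 * Q ^ 2 + 1) / (3 * Q) + m := by
      apply mul_left_cancel₀ two_pi_I_ne_zero
      rw [Nat.cast_sub hrQ.le] at hm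
      linear_combination hm
    field_simp at hm'
    exact_mod_cast (by linear_combination hm' : ((2 * r - Q) * (2 * Q ^ 2 + 1) : ℂ) = 3 * Q * m)
  -- reduce modulo 4: `4 ∣ Q` kills `3 Q m` and `2 Q²`, leaving `4 ∣ 2 r`
  have hQ' : (4 : ℤ) ∣ Q := by exact_mod_cast hQ
  have h4 : (4 : ℤ) ∣ 2 * r - Q := by
    have h1 : (4 : ℤ) ∣ (2 * r - Q) * (2 * Q ^ 2 + 1) := hint ▸ (hQ'.mul_left 3).mul_right m
    have h2 : (4 : ℤ) ∣ (2 * r - Q) * (2 * Q ^ 2) :=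
      (dvd_mul_of_dvd_right (dvd_pow hQ' two_ne_zero) 2).mul_left _
    rw [mul_add_one] at h1
    exact (dvd_add_right h2).mp h1
  obtain ⟨a, rfl⟩ := hr
  omega

theorem stmt5_general (s n : ℕ) : kloostermanS (2 ^ s) n ≠ 0 := by
  obtain ⟨r, hr, hrQ, hsq⟩ := exists_odd_sq_sub_dvd s (m := -24 * n + 1) ⟨-3 * n, by ring⟩
  have hQ4 : 4 ∣ 2 ^ (s + 2) := ⟨2 ^ s, by ring⟩
  have hQ3 : ¬ 3 ∣ 2 ^ (s + 2) := fun h => by have := Nat.prime_three.dvd_of_dvd_pow h; omega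
  have hQ12 : 2 ^ (s + 2) % 12 = 4 ∨ 2 ^ (s + 2) % 12 = 8 := by omega
  have hχr : ZMod.χ₄ r ≠ 0 := by
    rw [ZMod.χ₄_eq_neg_one_pow (Nat.odd_iff.mp hr)]
    exact pow_ne_zero _ (by norm_num)
  unfold kloostermanS
  rw [show 24 * ((2 ^ s : ℕ) : ℤ) = 3 * 2 ^ (s + 3) by push_cast; ring,
    show 24 * 2 ^ s = 6 * 2 ^ (s + 2) by ring,
    show 12 * ((2 ^ s : ℕ) : ℂ) = 3 * ((2 ^ (s + 2) : ℕ) : ℂ) by push_cast; ring,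
    sum_filter_sq_emod_eq ⟨-8 * n, by ring⟩ hr hrQ hsq _
      fun x hx => by rw [chi12_eq_zero_of_three_dvd hx, Int.cast_zero, zero_mul],
    sum_chi12_mul_exp hQ12, sum_chi12_mul_exp hQ12, χ₄_nat_sub_eq_neg hQ4 hr hrQ.le, Int.cast_neg,
    show ∀ a b c d e : ℂ, 1 / 2 * a * (2 * b * c * d + 2 * -b * c * e) = a * b * c * (d - e) from
      fun _ _ _ _ _ => by ring]
  refine mul_ne_zero (mul_ne_zero (mul_ne_zero ?_ (Int.cast_ne_zero.mpr hχr)) ?_)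
    (sub_ne_zero.mpr (exp_ne_exp_of_odd hQ4 hr hrQ))
  · exact ofReal_ne_zero.mpr (Real.sqrt_ne_zero'.mpr (by positivity))
  · exact isPrimitiveRoot_omega.pow_sub_pow_two_mul_ne_zero hQ3

theorem stmt5 (s n : ℕ) (hn : 1 ≤ n) : kloostermanS (2 ^ s) n ≠ 0 :=
  stmt5_general s n
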